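/- arXiv:2505.08916 — 8 statements merged into one kernel-verified Lean document; each statement's English description precedes it below -/
import Mathlib

section
/- Let Δ be a type and let S', S ⊆ Δ × Δ be binary relations. Suppose that for every binary relation S'' ⊆ S' there exist binary relations S₁ ⊆ S and S₂ ⊆ S such that Π_ℓ(S'') = Π_ℓ(S₁), Π_r(S'') = Π_r(S₂), and Π_r(S₁) = Π_ℓ(S₂). Then S' is contained in the relational composition S ∘ S = {(x,z) | ∃ y, (x,y) ∈ S and (y,z) ∈ S}. (Lemma 1 of the paper, the set-theoretic counterpart of the categorical property P_∘ for transitive roles.) -/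
/-- Lemma 1: set-theoretic counterpart of property P_∘ for transitive roles. -/
theorem stmt_0 {Δ : Type*} (S' S : Set (Δ × Δ))
    (h : ∀ S'' : Set (Δ × Δ), S'' ⊆ S' →
      ∃ S₁ : Set (Δ × Δ), S₁ ⊆ S ∧ ∃ S₂ : Set (Δ × Δ), S₂ ⊆ S ∧
        {x | ∃ y, (x, y) ∈ S''} = {x | ∃ y, (x, y) ∈ S₁} ∧
        {y | ∃ x, (x, y) ∈ S''} = {y | ∃ x, (x, y) ∈ S₂} ∧
        {y | ∃ x, (x, y) ∈ S₁} = {x | ∃ y, (x, y) ∈ S₂}) :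
    S' ⊆ {p : Δ × Δ | ∃ y, (p.1, y) ∈ S ∧ (y, p.2) ∈ S} := by
  rintro ⟨a, b⟩ hab
  obtain ⟨S₁, hS₁, S₂, hS₂, hl, hr, hm⟩ := h {(a, b)} (by simpa using hab)
  have ha : a ∈ {x | ∃ y, (x, y) ∈ S₁} := by
    rw [← hl]; exact ⟨b, rfl⟩
  obtain ⟨y, hy⟩ := ha
  have hy2 : y ∈ {x | ∃ y, (x, y) ∈ S₂} := by
    rw [← hm]; exact ⟨a, hy⟩
  obtain ⟨z, hz⟩ := hy2
  have hzb : z = b := by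
    have : z ∈ {y | ∃ x, (x, y) ∈ ({(a,b)} : Set (Δ × Δ))} := by
      rw [hr]; exact ⟨y, hz⟩
    obtain ⟨x, hx⟩ := this
    simpa using congrArg Prod.snd hx
  exact ⟨y, hS₁ hy, hS₂ (hzb ▸ hz)⟩
end

section
/- Let Δ be a type, let R and E be binary relations over Δ, and let C ⊆ Δ. Assume E ⊆ R and Π_r(E) ⊆ C (E plays the role of the relation 𝔯_{(∃R.C)}). Then Π_ℓ(E) = {x ∈ Δ | ∃ y ∈ C, (x,y) ∈ R} if and only if for every binary relation R' over Δ with R' ⊆ R and Π_r(R') ⊆ C one has Π_ℓ(R') ⊆ Π_ℓ(E). (Lemma 5 of the paper: the categorical properties P_∃^𝔯 and P_∃^H, read with ⊆ in place of arrows, characterize the set-theoretic semantics of existential restriction ∃R.C.) -/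
/-- Lemma 5: the categorical properties P_∃^𝔯 and P_∃^H characterize the
set semantics of existential restriction ∃R.C. -/
theorem stmt_4 {Δ : Type*} (R E : Set (Δ × Δ)) (C : Set Δ)
    (hER : E ⊆ R) (hEr : {y | ∃ x, (x, y) ∈ E} ⊆ C) :
    {x | ∃ y, (x, y) ∈ E} = {x : Δ | ∃ y ∈ C, (x, y) ∈ R} ↔
      (∀ R' : Set (Δ × Δ), R' ⊆ R → {y | ∃ x, (x, y) ∈ R'} ⊆ C →
        {x | ∃ y, (x, y) ∈ R'} ⊆ {x | ∃ y, (x, y) ∈ E}) := by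
  constructor
  · intro h R' hR' hproj x ⟨y, hy⟩
    rw [h]
    exact ⟨y, hproj ⟨x, hy⟩, hR' hy⟩
  · intro h
    apply Set.Subset.antisymm
    · rintro x ⟨y, hy⟩
      exact ⟨y, hEr ⟨x, hy⟩, hER hy⟩
    · rintro x ⟨y, hyC, hxy⟩
      exact h {(x, y)} (by simpa) (by simpa) ⟨y, rfl⟩
end

section
/- Let Δ be a type, let P', P, S, R be binary relations over Δ, and let D ⊆ Δ. Assume P' ⊆ P, P ⊆ S, S ⊆ R, and S is transitive (i.e., (x,y) ∈ S and (y,z) ∈ S imply (x,z) ∈ S, the set-theoretic reading of S ∘ S ⊑ S). If Π_ℓ(P') ⊆ {x ∈ Δ | ∀ z, (x,z) ∈ R → z ∈ D} (the interpretation of ∀R.D), then Π_r(P') ⊆ {y ∈ Δ | ∀ z, (y,z) ∈ S → z ∈ D} (the interpretation of ∀S.D). (Item 3 of Lemma 6 of the paper: the interaction property P_{∃∘}^∀ involving transitive roles holds under the set-theoretic semantics.) -/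
/-- Item 3 of Lemma 6: the interaction property P_{∃∘}^∀ with transitive roles
holds under the set semantics. -/
theorem stmt_6 {Δ : Type*} (P' P S R : Set (Δ × Δ)) (D : Set Δ)
    (hP'P : P' ⊆ P) (hPS : P ⊆ S) (hSR : S ⊆ R)
    (hTrans : ∀ x y z : Δ, (x, y) ∈ S → (y, z) ∈ S → (x, z) ∈ S)
    (h : {x | ∃ y, (x, y) ∈ P'} ⊆ {x : Δ | ∀ z, (x, z) ∈ R → z ∈ D}) :
    {y | ∃ x, (x, y) ∈ P'} ⊆ {y : Δ | ∀ z, (y, z) ∈ S → z ∈ D} := by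
  rintro y ⟨x, hxy⟩ z hyz
  exact h ⟨y, hxy⟩ z (hSR (hTrans x y z (hPS (hP'P hxy)) hyz))
end

section
/- Let L be a bounded lattice and ν : L → L a negation operator. Then the first De Morgan law holds: for all c, d ∈ L, ν(c ⊓ d) = ν c ⊔ ν d. (Property (37) of Lemma 8 of the paper: ¬(C ⊓ D) ⇄ ¬C ⊔ ¬D is derivable from the categorical negation properties, without assuming distributivity.) -/
/-- Property (37) of Lemma 8: first De Morgan law, without distributivity. -/
theorem stmt_10 {L : Type*} [Lattice L] [BoundedOrder L] (ν : L → L)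
    (h1 : ∀ c : L, c ⊓ ν c ≤ ⊥) (h2 : ∀ c : L, ⊤ ≤ c ⊔ ν c)
    (h3 : ∀ c x : L, c ⊓ x ≤ ⊥ → x ≤ ν c)
    (h4 : ∀ c x : L, ⊤ ≤ c ⊔ x → ν c ≤ x) :
    ∀ c d : L, ν (c ⊓ d) = ν c ⊔ ν d := by
  have anti : ∀ a b : L, a ≤ b → ν b ≤ ν a := by
    intro a b hab
    exact h3 a (ν b) (le_trans (inf_le_inf_left a (h3 b (ν b) (h1 b) |> fun _ => le_refl (ν b))) (le_trans (inf_le_inf_right (ν b) hab) (h1 b)))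
  have invol : ∀ a : L, ν (ν a) = a := by
    intro a
    apply le_antisymm
    · exact h4 (ν a) a (le_trans (h2 a) (sup_comm a (ν a) ▸ le_refl _))
    · exact h3 (ν a) a (by rw [inf_comm]; exact h1 a)
  have key : ∀ a b : L, ν (a ⊔ b) = ν a ⊓ ν b := by
    intro a b
    apply le_antisymm
    · exact le_inf (anti _ _ le_sup_left) (anti _ _ le_sup_right)
    · have h : a ⊔ b ≤ ν (ν a ⊓ ν b) := by
        apply sup_le
        · calc a = ν (ν a) := (invol a).symm
            _ ≤ ν (ν a ⊓ ν b) := anti _ _ inf_le_left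
        · calc b = ν (ν b) := (invol b).symm
            _ ≤ ν (ν a ⊓ ν b) := anti _ _ inf_le_right
      calc ν a ⊓ ν b = ν (ν (ν a ⊓ ν b)) := (invol _).symm
        _ ≤ ν (a ⊔ b) := anti _ _ h
  intro c d
  calc ν (c ⊓ d) = ν (ν (ν c) ⊓ ν (ν d)) := by rw [invol, invol]
    _ = ν (ν (ν c ⊔ ν d)) := by rw [key]
    _ = ν c ⊔ ν d := invol _
end

section
/- Let L be a bounded lattice and ν : L → L a negation operator. Then the second De Morgan law holds: for all c, d ∈ L, ν(c ⊔ d) = ν c ⊓ ν d. (Property (38) of Lemma 8 of the paper: ¬(C ⊔ D) ⇄ ¬C ⊓ ¬D is derivable from the categorical negation properties, without assuming distributivity.) -/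
/-- Property (38) of Lemma 8: second De Morgan law, without distributivity. -/
theorem stmt_11 {L : Type*} [Lattice L] [BoundedOrder L] (ν : L → L)
    (h1 : ∀ c : L, c ⊓ ν c ≤ ⊥) (h2 : ∀ c : L, ⊤ ≤ c ⊔ ν c)
    (h3 : ∀ c x : L, c ⊓ x ≤ ⊥ → x ≤ ν c)
    (h4 : ∀ c x : L, ⊤ ≤ c ⊔ x → ν c ≤ x) :
    ∀ c d : L, ν (c ⊔ d) = ν c ⊓ ν d := by
  have anti : ∀ a b : L, a ≤ b → ν b ≤ ν a := by
    intro a b hab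
    exact h3 a (ν b) (le_trans (inf_le_inf_right _ hab) (h1 b))
  have invol : ∀ a : L, ν (ν a) = a := by
    intro a
    refine le_antisymm (h4 (ν a) a ?_) (h3 (ν a) a ?_)
    · exact le_trans (h2 a) (sup_comm a (ν a)).le
    · exact le_trans (inf_comm (ν a) a).le (h1 a)
  intro c d
  refine le_antisymm (le_inf (anti _ _ le_sup_left) (anti _ _ le_sup_right)) ?_
  have h5 : c ⊔ d ≤ ν (ν c ⊓ ν d) := by
    refine sup_le ?_ ?_
    · calc c = ν (ν c) := (invol c).symm
        _ ≤ ν (ν c ⊓ ν d) := anti _ _ inf_le_left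
    · calc d = ν (ν d) := (invol d).symm
        _ ≤ ν (ν c ⊓ ν d) := anti _ _ inf_le_right
  calc ν c ⊓ ν d = ν (ν (ν c ⊓ ν d)) := (invol _).symm
    _ ≤ ν (c ⊔ d) := anti _ _ h5
end

section
/- Let L be a bounded lattice and ν : L → L a negation operator. Then for all c, d ∈ L: ⊤ ≤ ν c ⊔ d if and only if c ≤ d. (Property (39) of Lemma 8 of the paper: ⊤ → ¬C ⊔ D iff C → D is derivable from the categorical negation properties.) -/
/-- Property (39) of Lemma 8: ⊤ → ¬C ⊔ D iff C → D. -/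
theorem stmt_12 {L : Type*} [Lattice L] [BoundedOrder L] (ν : L → L)
    (h1 : ∀ c : L, c ⊓ ν c ≤ ⊥) (h2 : ∀ c : L, ⊤ ≤ c ⊔ ν c)
    (h3 : ∀ c x : L, c ⊓ x ≤ ⊥ → x ≤ ν c)
    (h4 : ∀ c x : L, ⊤ ≤ c ⊔ x → ν c ≤ x) :
    ∀ c d : L, ⊤ ≤ ν c ⊔ d ↔ c ≤ d := by
  intro c d
  constructor
  · intro h
    have hc : c ≤ ν (ν c) := h3 (ν c) c (by rw [inf_comm]; exact h1 c)
    exact hc.trans (h4 (ν c) d h)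
  · intro h
    exact (h2 c).trans (sup_le (le_sup_of_le_right h) le_sup_left)
end

section
/- Let L be a bounded lattice, ν : L → L a negation operator, f : L → L a monotone map (modeling C ↦ ∃R.C), and g : L → L an arbitrary map (modeling C ↦ ∀R.C). Then the following are equivalent: (a) for every c ∈ L, g c ≤ ν(f(ν c)); (b) for all c, d ∈ L, if c ⊓ d ≤ ⊥ then f c ⊓ g d ≤ ⊥. (Property (45) of Lemma 9 of the paper: ∀R.C → ¬∃R.¬C holds for all C if and only if disjointness C ⊓ D → ⊥ always entails ∃R.C ⊓ ∀R.D → ⊥.) -/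
/-- Property (45) of Lemma 9: ∀R.C → ¬∃R.¬C for all C iff disjointness
C ⊓ D → ⊥ always entails ∃R.C ⊓ ∀R.D → ⊥. -/
theorem stmt_14 {L : Type*} [Lattice L] [BoundedOrder L] (ν : L → L) (f g : L → L)
    (h1 : ∀ c : L, c ⊓ ν c ≤ ⊥) (h2 : ∀ c : L, ⊤ ≤ c ⊔ ν c)
    (h3 : ∀ c x : L, c ⊓ x ≤ ⊥ → x ≤ ν c)
    (h4 : ∀ c x : L, ⊤ ≤ c ⊔ x → ν c ≤ x)
    (hf : Monotone f) :
    (∀ c : L, g c ≤ ν (f (ν c))) ↔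
      (∀ c d : L, c ⊓ d ≤ ⊥ → f c ⊓ g d ≤ ⊥) := by
  constructor
  · intro h c d hcd
    have hc : c ≤ ν d := h3 d c (by rwa [inf_comm])
    calc f c ⊓ g d ≤ f (ν d) ⊓ ν (f (ν d)) := inf_le_inf (hf hc) (h d)
      _ ≤ ⊥ := h1 _
  · intro h c
    exact h3 _ _ (h (ν c) c (by rw [inf_comm]; exact h1 c))
end

section
/- Let L be a bounded lattice, ν : L → L a negation operator, f : L → L a monotone map (modeling C ↦ ∃R.C), and g : L → L an arbitrary map (modeling C ↦ ∀R.C). Then the following are equivalent: (a) for every c ∈ L, ν(f(ν c)) ≤ g c; (b) for all c, d ∈ L, if ⊤ ≤ c ⊔ d then ⊤ ≤ f c ⊔ g d. (Property (46) of Lemma 9 of the paper: ¬∃R.¬C → ∀R.C holds for all C if and only if ⊤ → C ⊔ D always entails ⊤ → ∃R.C ⊔ ∀R.D.) -/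
/-- Property (46) of Lemma 9: ¬∃R.¬C → ∀R.C for all C iff ⊤ → C ⊔ D always
entails ⊤ → ∃R.C ⊔ ∀R.D. -/
theorem stmt_15 {L : Type*} [Lattice L] [BoundedOrder L] (ν : L → L) (f g : L → L)
    (h1 : ∀ c : L, c ⊓ ν c ≤ ⊥) (h2 : ∀ c : L, ⊤ ≤ c ⊔ ν c)
    (h3 : ∀ c x : L, c ⊓ x ≤ ⊥ → x ≤ ν c)
    (h4 : ∀ c x : L, ⊤ ≤ c ⊔ x → ν c ≤ x)
    (hf : Monotone f) :
    (∀ c : L, ν (f (ν c)) ≤ g c) ↔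
      (∀ c d : L, ⊤ ≤ c ⊔ d → ⊤ ≤ f c ⊔ g d) := by
  constructor
  · intro h c d hcd
    have hdc : ν d ≤ c := h4 d c (by rwa [sup_comm] at hcd)
    have hmono : ν (f c) ≤ ν (f (ν d)) := by
      apply h3
      calc f (ν d) ⊓ ν (f c) ≤ f c ⊓ ν (f c) :=
            inf_le_inf_right _ (hf hdc)
        _ ≤ ⊥ := h1 _
    calc (⊤ : L) ≤ f c ⊔ ν (f c) := h2 _
      _ ≤ f c ⊔ g d := sup_le_sup_left (hmono.trans (h d)) _
  · intro h c
    exact h4 _ _ (h (ν c) c (by rw [sup_comm]; exact h2 c))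
end
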